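/- Let m ≥ 2, let U ⊆ ℂ^m be a connected open neighborhood of 0, and let X : U → ℂ^m be a holomorphic vector field such that [X, E] = 0 on U and L_X(∘)(Y,Z) = 0 on U for all differentiable vector fields Y, Z on U. Then there exist unique constants c_1, …, c_{m−1} ∈ ℂ such that X = Σ_{k=1}^{m−1} c_k · Y_k on U. In other words, the vector fields Y_1, …, Y_{m−1} form a basis of the Lie algebra of infinitesimal symmetries of the standard model (ℂ^m, ∘, e, E) near 0. -/

import Mathlib

open scoped BigOperators

noncomputable section

/-- The truncated-polynomial multiplication on `ℂ^m ≅ ℂ[X]/(X^m)`: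
`(u ∘ v)_k = Σ_{i+j=k} u_i v_j`. -/
def tmul {m : ℕ} (u v : Fin m → ℂ) : Fin m → ℂ :=
  fun k => ∑ i : Fin m, ∑ j : Fin m,
    if (i : ℕ) + (j : ℕ) = (k : ℕ) then u i * v j else 0

/-- The `i`-th standard basis vector of `ℂ^m` (zero if `i ≥ m`); `std 0` is the unit `e`. -/
def std {m : ℕ} (i : ℕ) : Fin m → ℂ := fun j => if (j : ℕ) = i then 1 else 0

/-- Lie bracket of vector fields on `ℂ^m`: `[X,Y](p) = DY(p)(X(p)) − DX(p)(Y(p))`. -/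
def bracket {m : ℕ} (X Y : (Fin m → ℂ) → Fin m → ℂ) : (Fin m → ℂ) → Fin m → ℂ :=
  fun p => fderiv ℂ Y p (X p) - fderiv ℂ X p (Y p)

/-- Pointwise truncated product of vector fields. -/
def pmul {m : ℕ} (X Y : (Fin m → ℂ) → Fin m → ℂ) : (Fin m → ℂ) → Fin m → ℂ :=
  fun p => tmul (X p) (Y p)

/-- Lie derivative of the multiplication `∘` along `X`:
`L_X(∘)(Y,Z) = [X, Y∘Z] − [X,Y]∘Z − Y∘[X,Z]`. -/
def lieD {m : ℕ} (X Y Z : (Fin m → ℂ) → Fin m → ℂ) : (Fin m → ℂ) → Fin m → ℂ :=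
  fun p => bracket X (pmul Y Z) p - tmul (bracket X Y p) (Z p) - tmul (Y p) (bracket X Z p)

/-- The Euler field `E(t) = (t_0 + a, t_1 + 1, t_2, …, t_{m−1})`. -/
def Efield {m : ℕ} (a : ℂ) : (Fin m → ℂ) → Fin m → ℂ :=
  fun p => p + a • std 0 + std 1

/-- The vector field `Y_1(t) = (0, t_1+1, 2t_2, 3t_3, …, (m−1)t_{m−1})`. -/
def Yone {m : ℕ} : (Fin m → ℂ) → Fin m → ℂ :=
  fun p j => if (j : ℕ) = 1 then p j + 1 else ((j : ℕ) : ℂ) * p j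

/-- The infinitesimal symmetries `Y_1` and `Y_k := δ_{k−1} ∘ Y_1` for `k ≥ 2`. -/
def Ysym {m : ℕ} : ℕ → (Fin m → ℂ) → Fin m → ℂ
  | 1 => Yone
  | k => fun p => tmul (std (k - 1)) (Yone p)

/-!
Applied to constant fields, `L_X(∘) = 0` says that every `DX(p)` is a derivation of
`ℂ[x]/(x^m)`. Such a derivation is `u ↦ g ∘ u'` with `g = DX(p)(x)`, and `g_0 = 0` because it
kills `x^m = 0`. Since `DE = id`, `[X, E] = 0` reads `X(p) = DX(p)(E(p)) = g(p) ∘ (p' + 1)`.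
Differentiating this identity gives `Dg(p)(u) ∘ (p' + 1) = 0`, so `g` is locally constant where
`p' + 1` is a unit, i.e. off the hyperplane `p_1 = -1`. A complex hyperplane does not disconnect
a ball, so `g` is locally constant on all of `U`, hence constant. Finally `Y_k(p) = x^k ∘ (p' + 1)`,
so `X = c ∘ (p' + 1)` with `c_0 = 0` is `∑ c_k Y_k`.
-/

open Metric
open scoped Topology

section TruncatedAlgebra

variable {m : ℕ}

-- `ofSeries m : ℂ⟦X⟧ → ℂ^m` is the quotient map onto `ℂ[X]/(X^m)` and `toSeries` a linear section
-- of it; `ofSeries_mul` transports the ring laws of `ℂ⟦X⟧` to `tmul`.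
def toSeries (u : Fin m → ℂ) : PowerSeries ℂ :=
  PowerSeries.mk fun n => if h : n < m then u ⟨n, h⟩ else 0

def ofSeries (m : ℕ) (A : PowerSeries ℂ) : Fin m → ℂ := fun k => PowerSeries.coeff (k : ℕ) A

lemma ofSeries_toSeries (u : Fin m → ℂ) : ofSeries m (toSeries u) = u := by
  ext k; simp [ofSeries, toSeries]

lemma ofSeries_mul (A B : PowerSeries ℂ) :
    ofSeries m (A * B) = tmul (ofSeries m A) (ofSeries m B) := by
  ext k
  have hk := k.isLt
  simp only [ofSeries, tmul, PowerSeries.coeff_mul]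
  rw [Fin.sum_univ_eq_sum_range (fun i => ∑ j : Fin m,
    if i + (j : ℕ) = k then PowerSeries.coeff i A * PowerSeries.coeff (j : ℕ) B else 0)]
  conv_rhs => enter [2, i]; rw [Fin.sum_univ_eq_sum_range (fun j =>
    if i + j = (k : ℕ) then PowerSeries.coeff i A * PowerSeries.coeff j B else 0)]
  rw [← Finset.sum_product', ← Finset.sum_filter]
  refine Finset.sum_congr ?_ fun _ _ => rfl
  ext ⟨i, j⟩
  simp only [Finset.HasAntidiagonal.mem_antidiagonal, Finset.mem_filter, Finset.mem_product,
    Finset.mem_range]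
  omega

lemma ofSeries_X_pow (i : ℕ) : ofSeries m (PowerSeries.X ^ i) = std i := by
  ext k; simp [ofSeries, std, PowerSeries.coeff_X_pow]

lemma tmul_comm (u v : Fin m → ℂ) : tmul u v = tmul v u := by
  rw [← ofSeries_toSeries u, ← ofSeries_toSeries v, ← ofSeries_mul, ← ofSeries_mul, mul_comm]

lemma tmul_assoc (u v w : Fin m → ℂ) : tmul (tmul u v) w = tmul u (tmul v w) := by
  rw [← ofSeries_toSeries u, ← ofSeries_toSeries v, ← ofSeries_toSeries w]
  simp only [← ofSeries_mul, mul_assoc]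

lemma tmul_std_std (i j : ℕ) : tmul (std i : Fin m → ℂ) (std j) = std (i + j) := by
  rw [← ofSeries_X_pow, ← ofSeries_X_pow, ← ofSeries_mul, ← pow_add, ofSeries_X_pow]

lemma tmul_std_zero (u : Fin m → ℂ) : tmul u (std 0) = u := by
  rw [← ofSeries_toSeries u, ← ofSeries_X_pow, ← ofSeries_mul, pow_zero, mul_one]

lemma std_zero_tmul (u : Fin m → ℂ) : tmul (std 0) u = u := by
  rw [tmul_comm, tmul_std_zero]

lemma exists_tmul_eq_std_zero [NeZero m] {v : Fin m → ℂ} (hv : v 0 ≠ 0) :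
    ∃ w, tmul v w = std 0 := by
  have hv' : PowerSeries.constantCoeff (toSeries v) ≠ 0 := by
    simpa [toSeries, NeZero.pos m] using hv
  refine ⟨ofSeries m (toSeries v)⁻¹, ?_⟩
  rw [← ofSeries_X_pow, pow_zero, ← PowerSeries.mul_inv_cancel _ hv', ofSeries_mul,
    ofSeries_toSeries]

lemma tmul_left_injective [NeZero m] {v : Fin m → ℂ} (hv : v 0 ≠ 0) :
    Function.Injective fun u => tmul u v := by
  obtain ⟨w, hw⟩ := exists_tmul_eq_std_zero hv
  intro u u' h
  simpa only [tmul_assoc, hw, tmul_std_zero] using congrArg (tmul · w) h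

lemma tmul_add (u v w : Fin m → ℂ) : tmul u (v + w) = tmul u v + tmul u w := by
  ext k; simp [tmul, mul_add, Finset.sum_add_distrib, ite_add_zero]

lemma add_tmul (u v w : Fin m → ℂ) : tmul (u + v) w = tmul u w + tmul v w := by
  ext k; simp [tmul, add_mul, Finset.sum_add_distrib, ite_add_zero]

lemma tmul_smul (c : ℂ) (u v : Fin m → ℂ) : tmul u (c • v) = c • tmul u v := by
  ext k; simp [tmul, Finset.mul_sum, mul_left_comm]

lemma smul_tmul (c : ℂ) (u v : Fin m → ℂ) : tmul (c • u) v = c • tmul u v := by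
  ext k; simp [tmul, Finset.mul_sum, mul_assoc]

lemma tmul_std_apply (u : Fin m → ℂ) (i : ℕ) (k : Fin m) :
    tmul u (std i) k = if i ≤ k then PowerSeries.coeff ((k : ℕ) - i) (toSeries u) else 0 := by
  conv_lhs => rw [← ofSeries_toSeries u, ← ofSeries_X_pow, ← ofSeries_mul]
  exact PowerSeries.coeff_mul_X_pow' _ _ _

def tmulL : (Fin m → ℂ) →L[ℂ] (Fin m → ℂ) →L[ℂ] (Fin m → ℂ) :=
  (LinearMap.mk₂ ℂ tmul add_tmul smul_tmul tmul_add tmul_smul).toContinuousBilinearMap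

@[simp] lemma tmulL_apply (u v : Fin m → ℂ) : tmulL u v = tmul u v := rfl

lemma isUnit_flip_tmulL [NeZero m] {v : Fin m → ℂ} (hv : v 0 ≠ 0) : IsUnit (tmulL.flip v) := by
  obtain ⟨w, hw⟩ := exists_tmul_eq_std_zero hv
  refine isUnit_iff_exists.mpr ⟨tmulL.flip w, ?_, ?_⟩ <;>
    ext1 u <;> simp [tmul_assoc, tmul_comm w, hw, tmul_std_zero]

def formalDeriv : (Fin m → ℂ) →L[ℂ] (Fin m → ℂ) :=
  LinearMap.toContinuousLinearMap <| LinearMap.pi fun j =>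
    if h : (j : ℕ) + 1 < m then ((j : ℕ) + 1 : ℂ) • LinearMap.proj ⟨j + 1, h⟩ else 0

lemma formalDeriv_apply (v : Fin m → ℂ) (j : Fin m) :
    formalDeriv v j = if h : (j : ℕ) + 1 < m then ((j : ℕ) + 1 : ℂ) * v ⟨j + 1, h⟩ else 0 := by
  simp only [formalDeriv, LinearMap.coe_toContinuousLinearMap', LinearMap.pi_apply]
  split_ifs <;> simp

lemma formalDeriv_std {i : ℕ} (hi : i < m) :
    formalDeriv (std i : Fin m → ℂ) = (i : ℂ) • std (i - 1) := by
  ext j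
  rw [formalDeriv_apply]
  rcases i with _ | i
  · simp [std]
  · by_cases hj : (j : ℕ) = i
    · simp [std, hj, show i + 1 < m from hi]
    · simp [std, hj]

def IsLeibniz (D : (Fin m → ℂ) →ₗ[ℂ] (Fin m → ℂ)) : Prop :=
  ∀ v w, D (tmul v w) = tmul (D v) w + tmul v (D w)

namespace IsLeibniz

variable {D : (Fin m → ℂ) →ₗ[ℂ] (Fin m → ℂ)}

lemma apply_std (hD : IsLeibniz D) (i : ℕ) :
    D (std i) = (i : ℂ) • tmul (D (std 1)) (std (i - 1)) := by
  induction i with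
  | zero =>
    have h := hD (std 0) (std 0)
    rw [tmul_std_std, tmul_std_zero, std_zero_tmul, left_eq_add] at h
    simp [h]
  | succ i ih =>
    rw [← tmul_std_std, hD, ih, smul_tmul, tmul_assoc, tmul_std_std, tmul_comm (std i)]
    rcases i with _ | i
    · simp
    · simp only [Nat.add_sub_cancel, Nat.cast_add, Nat.cast_one, add_smul, one_smul]

lemma eq_tmul_formalDeriv (hD : IsLeibniz D) (v : Fin m → ℂ) :
    D v = tmul (D (std 1)) (formalDeriv v) := by
  have hsingle : ∀ (i : Fin m) (x : ℂ), Pi.single i x = x • (std i : Fin m → ℂ) := by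
    intro i x; ext j; simp [std, Pi.single_apply, Fin.ext_iff]
  suffices D = (tmulL (D (std 1))).toLinearMap ∘ₗ formalDeriv.toLinearMap from
    LinearMap.congr_fun this v
  refine LinearMap.pi_ext fun i x => ?_
  rw [hsingle, map_smul, map_smul, LinearMap.comp_apply, ContinuousLinearMap.coe_coe,
    ContinuousLinearMap.coe_coe, formalDeriv_std i.isLt, tmulL_apply, tmul_smul, hD.apply_std]

lemma apply_std_one_zero [NeZero m] (hD : IsLeibniz D) : D (std 1) 0 = 0 := by
  have hm := NeZero.pos m
  have h := congrFun (hD.apply_std m) ⟨m - 1, by omega⟩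
  have hstd : (std m : Fin m → ℂ) = 0 := by ext j; simp [std, j.isLt.ne]
  simpa [hstd, tmul_std_apply, toSeries, hm, NeZero.ne m] using h.symm

end IsLeibniz

def formalDerivAddOne (p : Fin m → ℂ) : Fin m → ℂ := formalDeriv p + std 0

lemma hasFDerivAt_formalDerivAddOne (p : Fin m → ℂ) : HasFDerivAt formalDerivAddOne formalDeriv p :=
  formalDeriv.hasFDerivAt.add_const _

lemma formalDerivAddOne_zero : formalDerivAddOne (0 : Fin m → ℂ) = std 0 := by
  simp [formalDerivAddOne]

lemma formalDeriv_Efield (hm : 2 ≤ m) (a : ℂ) (p : Fin m → ℂ) :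
    formalDeriv (Efield a p) = formalDerivAddOne p := by
  simp [Efield, formalDerivAddOne, formalDeriv_std (show 0 < m by omega),
    formalDeriv_std (show 1 < m by omega)]

lemma Yone_eq (p : Fin m → ℂ) : Yone p = tmul (std 1) (formalDerivAddOne p) := by
  ext j
  rw [tmul_comm, tmul_std_apply]
  rcases j with ⟨_ | j, hj⟩
  · simp [Yone]
  · rcases j with _ | j <;> simp [Yone, toSeries, formalDerivAddOne, formalDeriv_apply, std, hj,
      Nat.lt_of_succ_lt hj]

lemma Ysym_succ (k : ℕ) (p : Fin m → ℂ) :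
    Ysym (k + 1) p = tmul (std (k + 1)) (formalDerivAddOne p) := by
  rcases k with _ | k
  · exact Yone_eq p
  · simp only [Ysym, Yone_eq, ← tmul_assoc, tmul_std_std, Nat.add_sub_cancel]

lemma sum_smul_Ysym {n : ℕ} (c : Fin (n + 1) → ℂ) (p : Fin (n + 2) → ℂ) :
    ∑ k : Fin (n + 1), c k • Ysym ((k : ℕ) + 1) p = tmul (Fin.cons 0 c) (formalDerivAddOne p) := by
  have hc : (Fin.cons 0 c : Fin (n + 2) → ℂ) = ∑ k : Fin (n + 1), c k • std ((k : ℕ) + 1) := by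
    ext j
    refine Fin.cases ?_ (fun j => ?_) j
    · simp [std]
    · simp [std, Finset.sum_apply, Fin.val_eq_val]
  rw [hc, ← tmulL_apply, ← ContinuousLinearMap.flip_apply, map_sum]
  simp [Ysym_succ]

lemma lieD_const (X : (Fin m → ℂ) → Fin m → ℂ) (v w p : Fin m → ℂ) :
    lieD X (fun _ => v) (fun _ => w) p =
      tmul (fderiv ℂ X p v) w + tmul v (fderiv ℂ X p w) - fderiv ℂ X p (tmul v w) := by
  have hneg : ∀ u u' : Fin m → ℂ, tmul (-u) u' = -tmul u u' := fun u u' => by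
    simpa using smul_tmul (-1) u u'
  have hconst : pmul (fun _ => v) (fun _ => w) = fun _ => tmul v w := rfl
  simp only [lieD, bracket, hconst, fderiv_const_apply, zero_apply, zero_sub, hneg,
    tmul_comm v (-_)]
  rw [tmul_comm _ v]
  abel

lemma isLeibniz_fderiv {X : (Fin m → ℂ) → Fin m → ℂ} {p : Fin m → ℂ}
    (h : ∀ v w, lieD X (fun _ => v) (fun _ => w) p = 0) :
    IsLeibniz (fderiv ℂ X p : (Fin m → ℂ) →ₗ[ℂ] (Fin m → ℂ)) := fun v w => by
  have := h v w
  rw [lieD_const, sub_eq_zero] at this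
  exact this.symm

lemma bracket_Efield (X : (Fin m → ℂ) → Fin m → ℂ) (a : ℂ) (p : Fin m → ℂ) :
    bracket X (Efield a) p = X p - fderiv ℂ X p (Efield a p) := by
  have h : HasFDerivAt (Efield (m := m) a) (ContinuousLinearMap.id ℂ _) p :=
    ((hasFDerivAt_id p).add_const _).add_const _
  simp [bracket, h.fderiv]

end TruncatedAlgebra

theorem isPreconnected_ball_diff_singleton {E : Type*} [NormedAddCommGroup E] [NormedSpace ℝ E]
    (hE : 1 < Module.rank ℝ E) (c a : E) (r : ℝ) : IsPreconnected (ball c r \ {a}) := by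
  by_cases ha : a ∈ ball c r
  swap
  · rw [Set.sdiff_singleton_eq_self ha]
    exact isPreconnected_ball
  have hr : 0 < r := pos_of_mem_ball ha
  set e := OpenPartialHomeomorph.univBall c r
  have he : ball c r \ {a} = e '' {e.symm a}ᶜ := by
    rw [← OpenPartialHomeomorph.univBall_target c hr] at ha ⊢
    ext y
    constructor
    · rintro ⟨hy, hya⟩
      refine ⟨e.symm y, fun h => hya ?_, e.right_inv hy⟩
      rw [← e.right_inv hy, ← e.right_inv ha]
      exact congrArg e h
    · rintro ⟨z, hz, rfl⟩
      have hzs : z ∈ e.source := by simp [e]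
      refine ⟨e.map_source hzs, fun h => hz ?_⟩
      rw [← h, e.left_inv hzs]
      rfl
  rw [he]
  exact (isConnected_compl_singleton_of_one_lt_rank hE _).isPreconnected.image e
    (e.continuousOn.mono (by simp [e]))

theorem isPreconnected_ball_inter_setOf_apply_ne {ι E : Type*} [Fintype ι] [NormedAddCommGroup E]
    [NormedSpace ℝ E] (hE : 1 < Module.rank ℝ E) (p : ι → E) (r : ℝ) (i : ι) (a : E) :
    IsPreconnected (ball p r ∩ {q | q i ≠ a}) := by
  classical
  rcases le_or_gt r 0 with hr | hr
  · simp [ball_eq_empty.mpr hr, isPreconnected_empty]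
  have h : ball p r ∩ {q | q i ≠ a} =
      Set.univ.pi (Function.update (fun j => ball (p j) r) i (ball (p i) r \ {a})) := by
    ext q
    simp only [ball_pi p hr, Set.mem_inter_iff, Set.mem_univ_pi, Set.mem_ofPred_eq]
    constructor
    · rintro ⟨hq, hqa⟩ j
      rcases eq_or_ne j i with rfl | hj <;> simp_all
    · intro hq
      have hi := hq i
      rw [Function.update_self] at hi
      refine ⟨fun j => ?_, hi.2⟩
      rcases eq_or_ne j i with rfl | hj
      · exact hi.1
      · simpa [hj] using hq j
  rw [h]
  refine isPreconnected_univ_pi fun j => ?_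
  rcases eq_or_ne j i with rfl | hj
  · simpa using isPreconnected_ball_diff_singleton hE (p j) a r
  · simpa [hj] using isPreconnected_ball

theorem dense_setOf_apply_ne {ι : Type*} (i : ι) (a : ℂ) : Dense {q : ι → ℂ | q i ≠ a} :=
  (dense_compl_singleton a).preimage (isOpenMap_eval i)

section Rigidity

variable {n : ℕ} {U : Set (Fin (n + 2) → ℂ)} {X g : (Fin (n + 2) → ℂ) → Fin (n + 2) → ℂ}

lemma formalDerivAddOne_apply_zero (p : Fin (n + 2) → ℂ) : formalDerivAddOne p 0 = p 1 + 1 := by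
  simp [formalDerivAddOne, formalDeriv_apply, std]

lemma formalDerivAddOne_apply_zero_ne_zero {p : Fin (n + 2) → ℂ} (hp : p 1 ≠ -1) :
    formalDerivAddOne p 0 ≠ 0 := by
  rw [formalDerivAddOne_apply_zero]
  exact fun h => hp (eq_neg_of_add_eq_zero_left h)

lemma hasFDerivAt_zero_of_apply_one_ne (hU : IsOpen U) (hX : ∀ p ∈ U, DifferentiableAt ℂ X p)
    (hXg : ∀ p ∈ U, X p = tmul (g p) (formalDerivAddOne p))
    (hDX : ∀ p ∈ U, ∀ u, fderiv ℂ X p u = tmul (g p) (formalDeriv u))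
    {p : Fin (n + 2) → ℂ} (hp : p ∈ U) (hp1 : p 1 ≠ -1) : HasFDerivAt (𝕜 := ℂ) g 0 p := by
  have hunit : ∀ q : Fin (n + 2) → ℂ, q 1 ≠ -1 → IsUnit (tmulL.flip (formalDerivAddOne q)) :=
    fun q hq => isUnit_flip_tmulL (formalDerivAddOne_apply_zero_ne_zero hq)
  have hW : U ∩ {q | q 1 ≠ -1} ∈ 𝓝 p :=
    (hU.inter (isOpen_ne_fun (continuous_apply 1) continuous_const)).mem_nhds ⟨hp, hp1⟩
  have hg : g =ᶠ[𝓝 p] fun q => Ring.inverse (tmulL.flip (formalDerivAddOne q)) (X q) := by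
    filter_upwards [hW] with q ⟨hqU, hq1⟩
    rw [hXg q hqU, ← tmulL_apply, ← ContinuousLinearMap.flip_apply, ← mul_apply_eq_comp,
      Ring.inverse_mul_cancel _ (hunit q hq1), one_apply_eq_self]
  have hgd : DifferentiableAt ℂ g p := by
    refine DifferentiableAt.congr_of_eventuallyEq ?_ hg
    refine DifferentiableAt.clm_apply ?_ (hX p hp)
    exact (differentiableAt_inverse (hunit p hp1)).comp p
      (tmulL.flip.differentiableAt.comp p (hasFDerivAt_formalDerivAddOne p).differentiableAt)
  have hXeq := ((tmulL.hasFDerivAt_of_bilinear hgd.hasFDerivAt (hasFDerivAt_formalDerivAddOne p))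
    |>.congr_of_eventuallyEq (Filter.eventuallyEq_of_mem (hU.mem_nhds hp) hXg)).fderiv
  have hDg : ∀ u, tmul (fderiv ℂ g p u) (formalDerivAddOne p) = 0 := fun u => by
    simpa [hDX p hp] using congrArg (· u) hXeq
  refine hgd.hasFDerivAt.congr_fderiv (ContinuousLinearMap.ext fun u => ?_)
  apply tmul_left_injective (formalDerivAddOne_apply_zero_ne_zero hp1)
  simp [hDg u, ← tmulL_apply]

lemma hasFDerivAt_tmul_formalDerivAddOne (c p : Fin (n + 2) → ℂ) :
    HasFDerivAt (fun q => tmul c (formalDerivAddOne q)) ((tmulL c).comp formalDeriv) p :=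
  (tmulL c).hasFDerivAt.comp p (hasFDerivAt_formalDerivAddOne p)

lemma hasFDerivAt_zero_of_mem (hU : IsOpen U) (hX : ∀ p ∈ U, DifferentiableAt ℂ X p)
    (hXg : ∀ p ∈ U, X p = tmul (g p) (formalDerivAddOne p))
    (hDX : ∀ p ∈ U, ∀ u, fderiv ℂ X p u = tmul (g p) (formalDeriv u))
    {p : Fin (n + 2) → ℂ} (hp : p ∈ U) : HasFDerivAt (𝕜 := ℂ) g 0 p := by
  obtain ⟨r, hr, hrU⟩ := Metric.isOpen_iff.mp hU p hp
  set S := ball p r ∩ {q | q 1 ≠ -1}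
  have hSo : IsOpen S := isOpen_ball.inter (isOpen_ne_fun (continuous_apply 1) continuous_const)
  have hS : IsPreconnected S :=
    isPreconnected_ball_inter_setOf_apply_ne (by simp [Complex.rank_real_complex]) p r 1 (-1)
  have hgS : ∀ q ∈ S, HasFDerivAt (𝕜 := ℂ) g 0 q := fun q hq =>
    hasFDerivAt_zero_of_apply_one_ne hU hX hXg hDX (hrU hq.1) hq.2
  obtain ⟨c, hc⟩ := hSo.exists_is_const_of_fderiv_eq_zero hS
    (fun q hq => (hgS q hq).differentiableAt.differentiableWithinAt) (fun q hq => (hgS q hq).fderiv)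
  have hXc : Set.EqOn X (fun q => tmul c (formalDerivAddOne q)) (ball p r) :=
    Set.EqOn.of_subset_closure (fun q hq => by rw [hXg q (hrU hq.1), hc q hq])
      (fun q hq => (hX q (hrU hq)).continuousAt.continuousWithinAt)
      (fun q _ => (hasFDerivAt_tmul_formalDerivAddOne c q).continuousAt.continuousWithinAt)
      Set.inter_subset_left ((dense_setOf_apply_ne 1 (-1)).open_subset_closure_inter isOpen_ball)
  have hgc : ∀ q ∈ ball p r, g q = c := by
    intro q hq
    have hXq : fderiv ℂ X q = (tmulL c).comp formalDeriv :=
      ((hasFDerivAt_tmul_formalDerivAddOne c q).congr_of_eventuallyEq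
        (Filter.eventuallyEq_of_mem (isOpen_ball.mem_nhds hq) hXc)).fderiv
    have := hDX q (hrU hq) (std 1)
    simpa [hXq, formalDeriv_std (show 1 < n + 2 by omega), tmul_std_zero] using this.symm
  refine (hasFDerivAt_const c p).congr_of_eventuallyEq ?_
  filter_upwards [ball_mem_nhds p hr] with q hq using hgc q hq

lemma exists_forall_eq_of_isPreconnected (hU : IsOpen U) (hUc : IsPreconnected U)
    (hX : ∀ p ∈ U, DifferentiableAt ℂ X p)
    (hXg : ∀ p ∈ U, X p = tmul (g p) (formalDerivAddOne p))
    (hDX : ∀ p ∈ U, ∀ u, fderiv ℂ X p u = tmul (g p) (formalDeriv u)) :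
    ∃ c, ∀ p ∈ U, g p = c :=
  hU.exists_is_const_of_fderiv_eq_zero hUc
    (fun _ hp => (hasFDerivAt_zero_of_mem hU hX hXg hDX hp).differentiableAt.differentiableWithinAt)
    (fun _ hp => (hasFDerivAt_zero_of_mem hU hX hXg hDX hp).fderiv)

end Rigidity

/-- (Proposition 30 of the paper.) Let `m ≥ 2`, `U ⊆ ℂ^m` a connected open
neighborhood of `0`, and `X` a holomorphic vector field on `U` with `[X,E] = 0` on `U` and
`L_X(∘)(Y,Z) = 0` on `U` for all differentiable vector fields `Y, Z` on `U`. Then there are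
unique constants `c_1, …, c_{m−1} ∈ ℂ` with `X = Σ_{k=1}^{m−1} c_k·Y_k` on `U`: the fields
`Y_1, …, Y_{m−1}` form a basis of the Lie algebra of infinitesimal symmetries of the
standard model near `0`. -/
theorem stmt7 {m : ℕ} (hm : 2 ≤ m) (a : ℂ)
    (U : Set (Fin m → ℂ)) (hUopen : IsOpen U) (hUconn : IsConnected U)
    (hU0 : (0 : Fin m → ℂ) ∈ U)
    (X : (Fin m → ℂ) → Fin m → ℂ)
    (hX : ∀ p ∈ U, DifferentiableAt ℂ X p)
    (hXE : ∀ p ∈ U, bracket X (Efield a) p = 0)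
    (hXmul : ∀ Y Z : (Fin m → ℂ) → Fin m → ℂ,
      (∀ p ∈ U, DifferentiableAt ℂ Y p) → (∀ p ∈ U, DifferentiableAt ℂ Z p) →
      ∀ p ∈ U, lieD X Y Z p = 0) :
    ∃! c : Fin (m - 1) → ℂ,
      ∀ p ∈ U, X p = ∑ k : Fin (m - 1), c k • Ysym ((k : ℕ) + 1) p := by
  obtain ⟨n, rfl⟩ : ∃ n, m = n + 2 := ⟨m - 2, by omega⟩
  rw [show n + 2 - 1 = n + 1 from rfl]
  have hleib : ∀ p ∈ U, IsLeibniz (fderiv ℂ X p : (Fin (n + 2) → ℂ) →ₗ[ℂ] (Fin (n + 2) → ℂ)) :=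
    fun p hp => isLeibniz_fderiv fun v w =>
      hXmul _ _ (fun _ _ => differentiableAt_const v) (fun _ _ => differentiableAt_const w) p hp
  have hDX : ∀ p ∈ U, ∀ u, fderiv ℂ X p u = tmul (fderiv ℂ X p (std 1)) (formalDeriv u) :=
    fun p hp => (hleib p hp).eq_tmul_formalDeriv
  have hXg : ∀ p ∈ U, X p = tmul (fderiv ℂ X p (std 1)) (formalDerivAddOne p) := fun p hp => by
    rw [← formalDeriv_Efield hm a, ← hDX p hp, ← sub_eq_zero, ← bracket_Efield, hXE p hp]
  obtain ⟨c, hc⟩ := exists_forall_eq_of_isPreconnected hUopen hUconn.isPreconnected hX hXg hDX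
  have hc0 : c 0 = 0 := hc 0 hU0 ▸ (hleib 0 hU0).apply_std_one_zero
  have hXc : ∀ p ∈ U, X p = tmul (Fin.cons 0 (Fin.tail c)) (formalDerivAddOne p) := fun p hp => by
    rw [← hc0, Fin.cons_self_tail, hXg p hp, hc p hp]
  refine ⟨Fin.tail c, fun p hp => ?_, fun c' hc' => ?_⟩
  · rw [hXc p hp, ← sum_smul_Ysym]
  · have h0 := (hXc 0 hU0).symm.trans (hc' 0 hU0)
    rw [sum_smul_Ysym, formalDerivAddOne_zero, tmul_std_zero, tmul_std_zero] at h0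
    funext k
    simpa using (congrFun h0 k.succ).symm
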